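/- Let (X, d₁), (Y, d₂) be disjoint compact strictly quasihypermetric spaces with M(X), M(Y) < ∞, and Z = X ∪ Y metrized with cross-distance constant c, 2c ≥ max(D(X), D(Y)). Then Z is strictly quasihypermetric if and only if 2c ≥ M(X) + M(Y) and additionally (2c > M(X) + M(Y), or X has no maximal measure, or Y has no maximal measure). -/

import Mathlib

/-!
A signed measure on `X ⊕ Y` is a pair `(ν₁, ν₂)`, and for the joined metric its energy is
`I(ν₁) + I(ν₂) + 2c ν₁(X) ν₂(Y)`. If the total mass is zero and `a = ν₁(X) = -ν₂(Y) ≠ 0`, rescaling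
to unit mass gives `I(ν₁) ≤ a² M(X)` and `I(ν₂) ≤ a² M(Y)`, so the energy is at most
`a² (M(X) + M(Y) - 2c)`, with equality only if `ν₁ / a` and `-ν₂ / a` are maximal measures; if
`a = 0` the strict quasihypermetricity of `X` and `Y` applies. Conversely, for unit-mass `μ₁, μ₂`
the measure `(μ₁, -μ₂)` has mass zero, is nonzero, and has energy `I(μ₁) + I(μ₂) - 2c`.
-/

open MeasureTheory

/-- Integral of a function against a finite signed Borel measure, via Jordan decomposition. -/
noncomputable def sInt {X : Type*} [MeasurableSpace X] (μ : SignedMeasure X) (f : X → ℝ) : ℝ :=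
  (∫ x, f x ∂μ.toJordanDecomposition.posPart) - ∫ x, f x ∂μ.toJordanDecomposition.negPart

/-- Energy `I(μ, ν) = ∫∫ d(x,y) dμ(x) dν(y)` with respect to a kernel `d`. -/
noncomputable def en {X : Type*} [MeasurableSpace X] (d : X → X → ℝ)
    (μ ν : SignedMeasure X) : ℝ :=
  sInt μ (fun x => sInt ν (fun y => d x y))

/-- The potential `d_μ(x) = ∫ d(x,y) dμ(y)`. -/
noncomputable def dPot {X : Type*} [MeasurableSpace X] (d : X → X → ℝ)
    (μ : SignedMeasure X) (x : X) : ℝ :=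
  sInt μ (fun y => d x y)

/-- The set of energies `I(μ)` of signed Borel measures of total mass one. -/
noncomputable def MSet (X : Type*) [MetricSpace X] [MeasurableSpace X] : Set ℝ :=
  {r | ∃ μ : SignedMeasure X, μ Set.univ = (1 : ℝ) ∧ en (fun x y => dist x y) μ μ = r}

/-- The combined distance function on the disjoint union `X ⊕ Y`: it agrees with `d₁`
on `X`, with `d₂` on `Y`, and equals the constant `c` between `X` and `Y`. -/
def dJoin {X Y : Type*} (d₁ : X → X → ℝ) (d₂ : Y → Y → ℝ) (c : ℝ) :
    X ⊕ Y → X ⊕ Y → ℝ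
  | .inl x, .inl x' => d₁ x x'
  | .inr y, .inr y' => d₂ y y'
  | _, _ => c

open Set

section SignedIntegral

variable {Z : Type*} [MeasurableSpace Z]

def BoundedMeasurable (f : Z → ℝ) : Prop := Measurable f ∧ ∃ C : ℝ, ∀ x, |f x| ≤ C

namespace BoundedMeasurable

lemma integrable {f : Z → ℝ} (hf : BoundedMeasurable f) (m : Measure Z) [IsFiniteMeasure m] :
    Integrable f m :=
  .of_bound hf.1.aestronglyMeasurable hf.2.choose (.of_forall hf.2.choose_spec)

lemma const (k : ℝ) : BoundedMeasurable (fun _ : Z => k) := ⟨measurable_const, |k|, fun _ => le_rfl⟩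

lemma add {f g : Z → ℝ} (hf : BoundedMeasurable f) (hg : BoundedMeasurable g) :
    BoundedMeasurable (fun x => f x + g x) := by
  obtain ⟨hmf, C, hC⟩ := hf
  obtain ⟨hmg, D, hD⟩ := hg
  exact ⟨hmf.add hmg, C + D, fun x => (abs_add_le _ _).trans (add_le_add (hC x) (hD x))⟩

lemma sumElim {W : Type*} [MeasurableSpace W] {f : Z → ℝ} {g : W → ℝ} (hf : BoundedMeasurable f)
    (hg : BoundedMeasurable g) : BoundedMeasurable (Sum.elim f g) := by
  obtain ⟨hmf, C, hC⟩ := hf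
  obtain ⟨hmg, D, hD⟩ := hg
  refine ⟨hmf.sumElim hmg, max C D, ?_⟩
  rintro (x | y)
  · exact (hC x).trans (le_max_left _ _)
  · exact (hD y).trans (le_max_right _ _)

end BoundedMeasurable

lemma Continuous.boundedMeasurable [TopologicalSpace Z] [CompactSpace Z] [OpensMeasurableSpace Z]
    {f : Z → ℝ} (hf : Continuous f) : BoundedMeasurable f := by
  obtain ⟨C, hC⟩ := isCompact_univ.exists_bound_of_continuousOn hf.continuousOn
  exact ⟨hf.measurable, C, fun x => by simpa using hC x (mem_univ x)⟩

lemma sInt_eq_of_eq_sub {μ : SignedMeasure Z} {p q : Measure Z} [IsFiniteMeasure p]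
    [IsFiniteMeasure q] (hμ : μ = p.toSignedMeasure - q.toSignedMeasure) {f : Z → ℝ}
    (hf : BoundedMeasurable f) : sInt μ f = (∫ x, f x ∂p) - ∫ x, f x ∂q := by
  set j := μ.toJordanDecomposition
  have hj : j.posPart + q = p + j.negPart := by
    have h : j.posPart.toSignedMeasure - j.negPart.toSignedMeasure
        = p.toSignedMeasure - q.toSignedMeasure := by
      rw [← JordanDecomposition.toSignedMeasure,
        SignedMeasure.toSignedMeasure_toJordanDecomposition, hμ]
    rwa [sub_eq_sub_iff_add_eq_add, ← Measure.toSignedMeasure_add, ← Measure.toSignedMeasure_add,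
      Measure.toSignedMeasure_eq_toSignedMeasure_iff] at h
  have h := congrArg (fun m => ∫ x, f x ∂m) hj
  simp only [integral_add_measure (hf.integrable _) (hf.integrable _)] at h
  unfold sInt
  linarith

lemma sInt_const (μ : SignedMeasure Z) (k : ℝ) : sInt μ (fun _ => k) = k * μ univ := by
  rw [μ.apply_eq_posPart_real_sub_negPart_real MeasurableSet.univ]
  simp only [sInt, integral_const, smul_eq_mul]
  ring

lemma sInt_add (μ : SignedMeasure Z) {f g : Z → ℝ} (hf : BoundedMeasurable f)
    (hg : BoundedMeasurable g) : sInt μ (fun x => f x + g x) = sInt μ f + sInt μ g := by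
  simp only [sInt, integral_add (hf.integrable _) (hg.integrable _)]
  ring

lemma sInt_const_mul (μ : SignedMeasure Z) (f : Z → ℝ) (r : ℝ) :
    sInt μ (fun x => r * f x) = r * sInt μ f := by
  simp only [sInt, integral_const_mul]
  ring

lemma sInt_neg (μ : SignedMeasure Z) {f : Z → ℝ} (hf : BoundedMeasurable f) :
    sInt (-μ) f = -sInt μ f := by
  have h : -μ = μ.toJordanDecomposition.negPart.toSignedMeasure
      - μ.toJordanDecomposition.posPart.toSignedMeasure := by
    conv_lhs => rw [← μ.toSignedMeasure_toJordanDecomposition]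
    rw [JordanDecomposition.toSignedMeasure, neg_sub]
  rw [sInt_eq_of_eq_sub h hf, sInt]
  ring

lemma sInt_smul_of_nonneg (μ : SignedMeasure Z) {f : Z → ℝ} (hf : BoundedMeasurable f) {r : ℝ}
    (hr : 0 ≤ r) : sInt (r • μ) f = r * sInt μ f := by
  have h : r • μ = (r.toNNReal • μ.toJordanDecomposition.posPart).toSignedMeasure
      - (r.toNNReal • μ.toJordanDecomposition.negPart).toSignedMeasure := by
    conv_lhs => rw [← μ.toSignedMeasure_toJordanDecomposition]
    ext s hs
    simp [JordanDecomposition.toSignedMeasure, Measure.toSignedMeasure_apply_measurable hs,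
      NNReal.smul_def, hr, mul_sub]
  rw [sInt_eq_of_eq_sub h hf, integral_smul_nnreal_measure, integral_smul_nnreal_measure,
    NNReal.smul_def, NNReal.smul_def, Real.coe_toNNReal r hr, sInt]
  simp only [smul_eq_mul]
  ring

lemma sInt_smul (μ : SignedMeasure Z) {f : Z → ℝ} (hf : BoundedMeasurable f) (r : ℝ) :
    sInt (r • μ) f = r * sInt μ f := by
  rcases le_or_gt 0 r with hr | hr
  · exact sInt_smul_of_nonneg μ hf hr
  · have h : r • μ = -((-r) • μ) := by
      ext s hs
      simp
    rw [h, sInt_neg _ hf, sInt_smul_of_nonneg μ hf (neg_nonneg.2 hr.le)]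
    ring

end SignedIntegral

lemma MeasureTheory.Measure.toSignedMeasure_map {X Y : Type*} [MeasurableSpace X]
    [MeasurableSpace Y] (p : Measure X) [IsFiniteMeasure p] {f : X → Y} (hf : Measurable f) :
    (p.map f).toSignedMeasure = p.toSignedMeasure.map f := by
  ext s hs
  rw [VectorMeasure.map_apply _ hf hs, Measure.toSignedMeasure_apply_measurable hs,
    Measure.toSignedMeasure_apply_measurable (hf hs), measureReal_def, measureReal_def,
    Measure.map_apply hf hs]

section DisjointUnion

variable {X Y : Type*} [MeasurableSpace X] [MeasurableSpace Y]

lemma measurableEmbedding_inl : MeasurableEmbedding (Sum.inl : X → X ⊕ Y) :=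
  ⟨Sum.inl_injective, measurable_inl, fun _ hs => hs.inl_image⟩

lemma measurableEmbedding_inr : MeasurableEmbedding (Sum.inr : Y → X ⊕ Y) :=
  ⟨Sum.inr_injective, measurable_inr, fun _ hs => measurableSet_inr_image.2 hs⟩

lemma map_comap_inl_add_map_comap_inr (m : Measure (X ⊕ Y)) :
    (m.comap Sum.inl).map Sum.inl + (m.comap Sum.inr).map Sum.inr = m := by
  rw [measurableEmbedding_inl.map_comap, measurableEmbedding_inr.map_comap, ← compl_range_inl,
    Measure.restrict_add_restrict_compl measurableSet_range_inl]

lemma map_inl_add_map_inr_eq_sub (ν₁ : SignedMeasure X) (ν₂ : SignedMeasure Y) :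
    ν₁.map Sum.inl + ν₂.map Sum.inr
      = (ν₁.toJordanDecomposition.posPart.map Sum.inl
          + ν₂.toJordanDecomposition.posPart.map Sum.inr).toSignedMeasure
        - (ν₁.toJordanDecomposition.negPart.map Sum.inl
          + ν₂.toJordanDecomposition.negPart.map Sum.inr).toSignedMeasure := by
  conv_lhs => rw [← ν₁.toSignedMeasure_toJordanDecomposition,
    ← ν₂.toSignedMeasure_toJordanDecomposition]
  simp only [JordanDecomposition.toSignedMeasure, Measure.toSignedMeasure_add,
    Measure.toSignedMeasure_map _ measurable_inl, Measure.toSignedMeasure_map _ measurable_inr]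
  simp only [← VectorMeasure.mapₗ_apply (R := ℝ), map_sub]
  abel

lemma exists_eq_map_inl_add_map_inr (μ : SignedMeasure (X ⊕ Y)) :
    ∃ (ν₁ : SignedMeasure X) (ν₂ : SignedMeasure Y), μ = ν₁.map Sum.inl + ν₂.map Sum.inr := by
  let p := μ.toJordanDecomposition.posPart
  let q := μ.toJordanDecomposition.negPart
  refine ⟨(p.comap Sum.inl).toSignedMeasure - (q.comap Sum.inl).toSignedMeasure,
    (p.comap Sum.inr).toSignedMeasure - (q.comap Sum.inr).toSignedMeasure, ?_⟩
  conv_lhs => rw [← μ.toSignedMeasure_toJordanDecomposition, JordanDecomposition.toSignedMeasure]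
  rw [Measure.toSignedMeasure_congr (map_comap_inl_add_map_comap_inr p).symm,
    Measure.toSignedMeasure_congr (map_comap_inl_add_map_comap_inr q).symm]
  simp only [Measure.toSignedMeasure_add,
    Measure.toSignedMeasure_map _ measurable_inl, Measure.toSignedMeasure_map _ measurable_inr]
  simp only [← VectorMeasure.mapₗ_apply (R := ℝ), map_sub]
  abel

lemma integral_map_inl_add_map_inr (p₁ : Measure X) (p₂ : Measure Y) [IsFiniteMeasure p₁]
    [IsFiniteMeasure p₂] {f : X ⊕ Y → ℝ} (hf : BoundedMeasurable f) :
    ∫ z, f z ∂(p₁.map Sum.inl + p₂.map Sum.inr)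
      = (∫ x, f (Sum.inl x) ∂p₁) + ∫ y, f (Sum.inr y) ∂p₂ := by
  rw [integral_add_measure (hf.integrable _) (hf.integrable _),
    measurableEmbedding_inl.integral_map, measurableEmbedding_inr.integral_map]

lemma sInt_map_inl_add_map_inr (ν₁ : SignedMeasure X) (ν₂ : SignedMeasure Y) {f : X ⊕ Y → ℝ}
    (hf : BoundedMeasurable f) :
    sInt (ν₁.map Sum.inl + ν₂.map Sum.inr) f
      = sInt ν₁ (fun x => f (Sum.inl x)) + sInt ν₂ (fun y => f (Sum.inr y)) := by
  rw [sInt_eq_of_eq_sub (map_inl_add_map_inr_eq_sub ν₁ ν₂) hf,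
    integral_map_inl_add_map_inr _ _ hf, integral_map_inl_add_map_inr _ _ hf, sInt, sInt]
  ring

lemma map_inl_add_map_inr_apply_univ (ν₁ : SignedMeasure X) (ν₂ : SignedMeasure Y) :
    (ν₁.map Sum.inl + ν₂.map Sum.inr : SignedMeasure (X ⊕ Y)) univ = ν₁ univ + ν₂ univ := by
  rw [_root_.add_apply, VectorMeasure.map_apply _ measurable_inl .univ,
    VectorMeasure.map_apply _ measurable_inr .univ, preimage_univ, preimage_univ]

lemma map_inl_add_map_inr_apply_range_inl (ν₁ : SignedMeasure X) (ν₂ : SignedMeasure Y) :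
    (ν₁.map Sum.inl + ν₂.map Sum.inr : SignedMeasure (X ⊕ Y)) (range Sum.inl) = ν₁ univ := by
  rw [_root_.add_apply, VectorMeasure.map_apply _ measurable_inl measurableSet_range_inl,
    VectorMeasure.map_apply _ measurable_inr measurableSet_range_inl, preimage_inr_range_inl,
    preimage_range, VectorMeasure.empty, add_zero]

end DisjointUnion

section Energy

variable {X : Type*} [MetricSpace X] [CompactSpace X] [MeasurableSpace X] [BorelSpace X]

lemma boundedMeasurable_dist (x : X) : BoundedMeasurable (dist x) :=
  (continuous_const.dist continuous_id).boundedMeasurable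

lemma continuous_integral_dist (m : Measure X) [IsFiniteMeasure m] :
    Continuous (fun x => ∫ y, dist x y ∂m) := by
  simpa using continuous_parametric_integral_of_continuous (μ := m) continuous_dist isCompact_univ

lemma boundedMeasurable_dPot (ν : SignedMeasure X) : BoundedMeasurable (dPot dist ν) :=
  ((continuous_integral_dist _).sub (continuous_integral_dist _)).boundedMeasurable

lemma en_smul (r : ℝ) (ν : SignedMeasure X) :
    en dist (r • ν) (r • ν) = r ^ 2 * en dist ν ν := by
  have h : dPot dist (r • ν) = fun x => r * dPot dist ν x :=
    funext fun x => sInt_smul ν (boundedMeasurable_dist x) r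
  change sInt (r • ν) (dPot dist (r • ν)) = r ^ 2 * sInt ν (dPot dist ν)
  rw [h, sInt_const_mul, sInt_smul ν (boundedMeasurable_dPot ν)]
  ring

lemma en_div_sq_mem_MSet {ν : SignedMeasure X} (hν : ν univ ≠ 0) :
    en dist ν ν / ν univ ^ 2 ∈ MSet X := by
  refine ⟨(ν univ)⁻¹ • ν, by rw [smul_apply, smul_eq_mul, inv_mul_cancel₀ hν], ?_⟩
  rw [en_smul]
  field_simp

lemma en_le_sq_mul_of_isLUB {m : ℝ} (hm : IsLUB (MSet X) m) {ν : SignedMeasure X}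
    (hν : ν univ ≠ 0) : en dist ν ν ≤ ν univ ^ 2 * m := by
  rw [← div_le_iff₀' (by positivity)]
  exact hm.1 (en_div_sq_mem_MSet hν)

lemma mem_MSet_of_en_eq {m : ℝ} {ν : SignedMeasure X} (hν : ν univ ≠ 0)
    (h : en dist ν ν = ν univ ^ 2 * m) : m ∈ MSet X := by
  simpa [h, hν] using en_div_sq_mem_MSet hν

end Energy

lemma dJoin_inl {X Y : Type*} (d₁ : X → X → ℝ) (d₂ : Y → Y → ℝ) (c : ℝ) (x : X) :
    dJoin d₁ d₂ c (Sum.inl x) = Sum.elim (d₁ x) (fun _ => c) := by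
  funext w
  cases w <;> rfl

lemma dJoin_inr {X Y : Type*} (d₁ : X → X → ℝ) (d₂ : Y → Y → ℝ) (c : ℝ) (y : Y) :
    dJoin d₁ d₂ c (Sum.inr y) = Sum.elim (fun _ => c) (d₂ y) := by
  funext w
  cases w <;> rfl

def StrictlyQuasihypermetric {Z : Type*} [MeasurableSpace Z] (d : Z → Z → ℝ) : Prop :=
  ∀ μ : SignedMeasure Z, μ univ = 0 → en d μ μ ≤ 0 ∧ (en d μ μ = 0 → μ = 0)

lemma add_le_of_isLUB_of_forall_add_le {S T : Set ℝ} {a b k : ℝ} (ha : IsLUB S a)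
    (hb : IsLUB T b) (h : ∀ x ∈ S, ∀ y ∈ T, x + y ≤ k) : a + b ≤ k := by
  have hT : ∀ y ∈ T, y ≤ k - a := fun y hy =>
    le_sub_comm.1 (ha.2 fun x hx => le_sub_iff_add_le.2 (h x hx y hy))
  linarith [hb.2 hT]

section Join

variable {X Y : Type*} [MetricSpace X] [CompactSpace X] [MeasurableSpace X] [BorelSpace X]
  [MetricSpace Y] [CompactSpace Y] [MeasurableSpace Y] [BorelSpace Y] (c : ℝ)

lemma dPot_dJoin (ν₁ : SignedMeasure X) (ν₂ : SignedMeasure Y) :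
    dPot (dJoin dist dist c) (ν₁.map Sum.inl + ν₂.map Sum.inr)
      = Sum.elim (fun x => dPot dist ν₁ x + c * ν₂ univ)
          (fun y => c * ν₁ univ + dPot dist ν₂ y) := by
  funext z
  rcases z with x | y
  · rw [dPot, dJoin_inl,
      sInt_map_inl_add_map_inr _ _ ((boundedMeasurable_dist x).sumElim (.const c))]
    simp only [Sum.elim_inl, Sum.elim_inr, sInt_const]
    rfl
  · rw [dPot, dJoin_inr,
      sInt_map_inl_add_map_inr _ _ ((BoundedMeasurable.const c).sumElim (boundedMeasurable_dist y))]
    simp only [Sum.elim_inl, Sum.elim_inr, sInt_const]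
    rfl

lemma en_dJoin_map_inl_add_map_inr (ν₁ : SignedMeasure X) (ν₂ : SignedMeasure Y) :
    en (dJoin dist dist c) (ν₁.map Sum.inl + ν₂.map Sum.inr) (ν₁.map Sum.inl + ν₂.map Sum.inr)
      = en dist ν₁ ν₁ + en dist ν₂ ν₂ + 2 * c * (ν₁ univ * ν₂ univ) := by
  change sInt _ (dPot _ _) = sInt ν₁ (dPot dist ν₁) + sInt ν₂ (dPot dist ν₂) + _
  rw [dPot_dJoin, sInt_map_inl_add_map_inr _ _ (((boundedMeasurable_dPot ν₁).add (.const _)).sumElim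
      ((BoundedMeasurable.const _).add (boundedMeasurable_dPot ν₂)))]
  simp only [Sum.elim_inl, Sum.elim_inr]
  rw [sInt_add _ (boundedMeasurable_dPot ν₁) (.const _),
    sInt_add _ (.const _) (boundedMeasurable_dPot ν₂), sInt_const, sInt_const]
  ring

lemma add_lt_of_strictlyQuasihypermetric_dJoin
    (hq : StrictlyQuasihypermetric (dJoin (X := X) (Y := Y) dist dist c))
    {r₁ r₂ : ℝ} (h₁ : r₁ ∈ MSet X) (h₂ : r₂ ∈ MSet Y) : r₁ + r₂ < 2 * c := by
  obtain ⟨μ₁, hμ₁, rfl⟩ := h₁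
  obtain ⟨μ₂, hμ₂, rfl⟩ := h₂
  set μ : SignedMeasure (X ⊕ Y) := μ₁.map Sum.inl + ((-1 : ℝ) • μ₂).map Sum.inr with hμ
  have hmass : μ univ = 0 := by
    rw [hμ, map_inl_add_map_inr_apply_univ, smul_apply, hμ₁, hμ₂]
    norm_num
  have hne : μ ≠ 0 := fun h => by
    have h₁ := map_inl_add_map_inr_apply_range_inl μ₁ ((-1 : ℝ) • μ₂)
    rw [← hμ, h, hμ₁] at h₁
    exact zero_ne_one h₁
  have hen : en (dJoin dist dist c) μ μ = en dist μ₁ μ₁ + en dist μ₂ μ₂ - 2 * c := by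
    rw [hμ, en_dJoin_map_inl_add_map_inr, en_smul, smul_apply, hμ₁, hμ₂]
    ring
  obtain ⟨hle, hzero⟩ := hq μ hmass
  rw [hen] at hle hzero
  exact lt_of_le_of_ne (by linarith) fun h => hne (hzero (by linarith))

lemma strictlyQuasihypermetric_dJoin (hqX : StrictlyQuasihypermetric (dist : X → X → ℝ))
    (hqY : StrictlyQuasihypermetric (dist : Y → Y → ℝ)) {mX mY : ℝ} (hmX : IsLUB (MSet X) mX)
    (hmY : IsLUB (MSet Y) mY) (hle : mX + mY ≤ 2 * c)
    (hmax : mX + mY < 2 * c ∨ mX ∉ MSet X ∨ mY ∉ MSet Y) :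
    StrictlyQuasihypermetric (dJoin (X := X) (Y := Y) dist dist c) := by
  intro μ hμ
  obtain ⟨ν₁, ν₂, rfl⟩ := exists_eq_map_inl_add_map_inr μ
  rw [map_inl_add_map_inr_apply_univ] at hμ
  rw [en_dJoin_map_inl_add_map_inr]
  by_cases ha : ν₁ univ = 0
  · have hb : ν₂ univ = 0 := by linarith
    obtain ⟨h₁, h₁'⟩ := hqX ν₁ ha
    obtain ⟨h₂, h₂'⟩ := hqY ν₂ hb
    refine ⟨by rw [ha]; linarith, fun h => ?_⟩
    rw [ha, hb] at h
    rw [h₁' (by linarith), h₂' (by linarith), VectorMeasure.map_zero, VectorMeasure.map_zero,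
      add_zero]
  · have hb : ν₂ univ = -ν₁ univ := by linarith
    have hb' : ν₂ univ ≠ 0 := by rwa [hb, neg_ne_zero]
    have h₁ := en_le_sq_mul_of_isLUB hmX ha
    have h₂ := en_le_sq_mul_of_isLUB hmY hb'
    have ha2 : 0 < ν₁ univ ^ 2 := by positivity
    rw [hb, neg_sq] at h₂
    rw [hb]
    refine ⟨by nlinarith, fun h => ?_⟩
    have e₁ : en dist ν₁ ν₁ = ν₁ univ ^ 2 * mX := by nlinarith
    have e₂ : en dist ν₂ ν₂ = ν₂ univ ^ 2 * mY := by rw [hb, neg_sq]; nlinarith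
    have e : mX + mY = 2 * c := by nlinarith
    rcases hmax with h' | h' | h'
    · exact absurd e h'.ne
    · exact absurd (mem_MSet_of_en_eq ha e₁) h'
    · exact absurd (mem_MSet_of_en_eq hb' e₂) h'

end Join

theorem stmt7_general {X Y : Type*} [MetricSpace X] [CompactSpace X] [MeasurableSpace X] [BorelSpace X]
    [MetricSpace Y] [CompactSpace Y] [MeasurableSpace Y] [BorelSpace Y]
    (hqX : ∀ μ : SignedMeasure X, μ Set.univ = (0 : ℝ) →
      en (fun x y => dist x y) μ μ ≤ 0 ∧ (en (fun x y => dist x y) μ μ = 0 → μ = 0))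
    (hqY : ∀ μ : SignedMeasure Y, μ Set.univ = (0 : ℝ) →
      en (fun x y => dist x y) μ μ ≤ 0 ∧ (en (fun x y => dist x y) μ μ = 0 → μ = 0))
    (mX mY : ℝ) (hmX : IsLUB (MSet X) mX) (hmY : IsLUB (MSet Y) mY)
    (c : ℝ) :
    (∀ μ : SignedMeasure (X ⊕ Y), μ Set.univ = (0 : ℝ) →
        en (dJoin (fun x y => dist x y) (fun x y => dist x y) c) μ μ ≤ 0 ∧
          (en (dJoin (fun x y => dist x y) (fun x y => dist x y) c) μ μ = 0 → μ = 0)) ↔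
      (mX + mY ≤ 2 * c ∧
        (mX + mY < 2 * c ∨
          ¬ (∃ μ : SignedMeasure X, μ Set.univ = (1 : ℝ) ∧ en (fun x y => dist x y) μ μ = mX) ∨
          ¬ (∃ μ : SignedMeasure Y, μ Set.univ = (1 : ℝ) ∧ en (fun x y => dist x y) μ μ = mY))) := by
  refine ⟨fun hq => ?_, fun ⟨hle, hmax⟩ =>
    strictlyQuasihypermetric_dJoin c hqX hqY hmX hmY hle hmax⟩
  have hlt : ∀ r₁ ∈ MSet X, ∀ r₂ ∈ MSet Y, r₁ + r₂ < 2 * c := fun _ h₁ _ h₂ =>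
    add_lt_of_strictlyQuasihypermetric_dJoin c hq h₁ h₂
  refine ⟨add_le_of_isLUB_of_forall_add_le hmX hmY fun r₁ h₁ r₂ h₂ => (hlt r₁ h₁ r₂ h₂).le, ?_⟩
  by_cases hX : mX ∈ MSet X
  · by_cases hY : mY ∈ MSet Y
    · exact .inl (hlt mX hX mY hY)
    · exact .inr (.inr hY)
  · exact .inr (.inl hX)

/-- The join `Z = X ∪ Y` of two disjoint compact strictly quasihypermetric spaces with
finite `M`-constants and cross-distance `c` (with `2c ≥ max(D(X), D(Y))`) is strictly
quasihypermetric if and only if `2c ≥ M(X) + M(Y)` and in addition `2c > M(X) + M(Y)`,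
or `X` has no maximal measure, or `Y` has no maximal measure. -/
theorem stmt7 {X Y : Type*} [MetricSpace X] [CompactSpace X] [MeasurableSpace X] [BorelSpace X]
    [MetricSpace Y] [CompactSpace Y] [MeasurableSpace Y] [BorelSpace Y]
    (hqX : ∀ μ : SignedMeasure X, μ Set.univ = (0 : ℝ) →
      en (fun x y => dist x y) μ μ ≤ 0 ∧ (en (fun x y => dist x y) μ μ = 0 → μ = 0))
    (hqY : ∀ μ : SignedMeasure Y, μ Set.univ = (0 : ℝ) →
      en (fun x y => dist x y) μ μ ≤ 0 ∧ (en (fun x y => dist x y) μ μ = 0 → μ = 0))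
    (mX mY : ℝ) (hmX : IsLUB (MSet X) mX) (hmY : IsLUB (MSet Y) mY)
    (c : ℝ)
    (hc : max (Metric.diam (Set.univ : Set X)) (Metric.diam (Set.univ : Set Y)) ≤ 2 * c) :
    (∀ μ : SignedMeasure (X ⊕ Y), μ Set.univ = (0 : ℝ) →
        en (dJoin (fun x y => dist x y) (fun x y => dist x y) c) μ μ ≤ 0 ∧
          (en (dJoin (fun x y => dist x y) (fun x y => dist x y) c) μ μ = 0 → μ = 0)) ↔
      (mX + mY ≤ 2 * c ∧
        (mX + mY < 2 * c ∨
          ¬ (∃ μ : SignedMeasure X, μ Set.univ = (1 : ℝ) ∧ en (fun x y => dist x y) μ μ = mX) ∨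
          ¬ (∃ μ : SignedMeasure Y, μ Set.univ = (1 : ℝ) ∧ en (fun x y => dist x y) μ μ = mY))) :=
  stmt7_general hqX hqY mX mY hmX hmY c
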